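/- Let D be a division ring with central subfield K, and let f, g ∈ D be given by admissible linear systems (e_1, A_f, v_f) of dimension n_f and (e_1, A_g, v_g) of dimension n_g, where A_f has the block form [[a, b', b],[a', B, b''],[0, 0, 1]] with bottom row e_{n_f} (i.e., last row [0,…,0,1]) and v_f = λ_f e_{n_f} for λ_f ∈ K. Then the (n_f + n_g − 1)-dimensional system with system matrix [[a, b', λ_f b u_g],[a', B, λ_f b'' u_g],[0, 0, A_g]] (where u_g = e_1 of size n_g), right-hand side [0; 0; v_g], and u = e_1 is an admissible linear system representing f·g, provided its system matrix is invertible; moreover its system matrix is invertible. -/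

import Mathlib

/-!
Since the last row of `A_f` is `e_{n_f}`, `A_f = [[A, c], [0, 1]]` with `A` its leading
`k × k` block, and then also `A_f⁻¹ = [[A⁻¹, -A⁻¹ c], [0, 1]]`; hence `f = -λ_f (A⁻¹ c)_1`.
The new system matrix is block upper triangular, `[[A, λ_f c u_gᵀ], [0, A_g]]`, with inverse
`[[A⁻¹, -λ_f A⁻¹ c u_gᵀ A_g⁻¹], [0, A_g⁻¹]]`. Its first row applied to `[0; v_g]` is
`-λ_f (A⁻¹ c)_1 (A_g⁻¹ v_g)_1 = f g`, because `λ_f` is central.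
-/

namespace Matrix

section LastRowStandard

variable {R : Type*} [Ring R] {k : ℕ}

theorem row_last_of_mul_eq_one {M N : Matrix (Fin (k + 1)) (Fin (k + 1)) R}
    (hM : ∀ j, M (Fin.last k) j = if j = Fin.last k then 1 else 0) (hMN : M * N = 1) :
    ∀ j, N (Fin.last k) j = if j = Fin.last k then 1 else 0 := by
  intro j
  simpa [mul_apply, hM, one_apply, eq_comm] using congrFun (congrFun hMN (Fin.last k)) j

variable (M : Matrix (Fin (k + 1)) (Fin (k + 1)) R) {N : Matrix (Fin (k + 1)) (Fin (k + 1)) R}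

theorem submatrix_castSucc_mul (hN : ∀ j, N (Fin.last k) j = if j = Fin.last k then 1 else 0) :
    (M * N).submatrix Fin.castSucc Fin.castSucc =
      M.submatrix Fin.castSucc Fin.castSucc * N.submatrix Fin.castSucc Fin.castSucc := by
  ext i j
  simp [mul_apply, Fin.sum_univ_castSucc, hN, (Fin.castSucc_lt_last j).ne]

theorem mul_apply_castSucc_last (hN : ∀ j, N (Fin.last k) j = if j = Fin.last k then 1 else 0)
    (i : Fin k) :
    (M * N) i.castSucc (Fin.last k) =
      (M.submatrix Fin.castSucc Fin.castSucc *ᵥ fun m => N m.castSucc (Fin.last k)) i +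
        M i.castSucc (Fin.last k) := by
  simp [mul_apply, Fin.sum_univ_castSucc, hN, mulVec, dotProduct]

variable {M}

theorem submatrix_castSucc_mul_eq_one
    (hN : ∀ j, N (Fin.last k) j = if j = Fin.last k then 1 else 0) (hMN : M * N = 1) :
    M.submatrix Fin.castSucc Fin.castSucc * N.submatrix Fin.castSucc Fin.castSucc = 1 := by
  rw [← submatrix_castSucc_mul M hN, hMN, submatrix_one _ (Fin.castSucc_injective k)]

theorem apply_castSucc_last_eq_neg_mulVec
    (hM : ∀ j, M (Fin.last k) j = if j = Fin.last k then 1 else 0) (hNM : N * M = 1) (i : Fin k) :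
    N i.castSucc (Fin.last k) =
      -(N.submatrix Fin.castSucc Fin.castSucc *ᵥ fun m => M m.castSucc (Fin.last k)) i := by
  have h := mul_apply_castSucc_last N hM i
  rw [hNM, one_apply_ne (Fin.castSucc_lt_last i).ne] at h
  exact eq_neg_of_add_eq_zero_right h.symm

end LastRowStandard

section BlockTriangular

variable {m n R : Type*} [Fintype m] [Fintype n] [DecidableEq m] [DecidableEq n] [Ring R]
  {A A' : Matrix m m R} {D D' : Matrix n n R}

theorem fromBlocks_zero₂₁_mul_eq_one (B : Matrix m n R) (hA : A * A' = 1) (hD : D * D' = 1) :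
    fromBlocks A B 0 D * fromBlocks A' (-(A' * B * D')) 0 D' = 1 := by
  simp [fromBlocks_multiply, hA, hD, ← Matrix.mul_assoc]

theorem mul_fromBlocks_zero₂₁_eq_one (B : Matrix m n R) (hA : A' * A = 1) (hD : D' * D = 1) :
    fromBlocks A' (-(A' * B * D')) 0 D' * fromBlocks A B 0 D = 1 := by
  simp [fromBlocks_multiply, hA, hD, Matrix.mul_assoc]

end BlockTriangular

theorem fromBlocks_mul_apply_inl_of_eq_zero {l m n o R : Type*} [Fintype m] [Fintype n] [Ring R]
    (A : Matrix l m R) (B : Matrix l n R) (C : Matrix o m R) (D : Matrix o n R)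
    (v : Matrix n (Fin 1) R) (i : l) :
    (fromBlocks A B C D * of (Sum.elim (fun (_ : m) (_ : Fin 1) => (0 : R)) fun j => v j))
      (Sum.inl i) 0 = (B * v) i 0 := by
  simp [mul_apply]

end Matrix

open Matrix

theorem stmt11 {K D : Type*} [Field K] [DivisionRing D] [Algebra K D]
    {k ng : ℕ} [NeZero k] [NeZero ng]
    (Af : Matrix (Fin (k + 1)) (Fin (k + 1)) D)
    (Bf : Matrix (Fin (k + 1)) (Fin (k + 1)) D)
    (hBf : Af * Bf = 1 ∧ Bf * Af = 1)
    (Ag Bg : Matrix (Fin ng) (Fin ng) D)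
    (hBg : Ag * Bg = 1 ∧ Bg * Ag = 1)
    (lamf : K)
    (vf : Matrix (Fin (k + 1)) (Fin 1) D)
    (hvf : ∀ i, vf i 0 = if i = Fin.last k then algebraMap K D lamf else 0)
    (hAflast : ∀ j, Af (Fin.last k) j = if j = Fin.last k then (1 : D) else 0)
    (vg : Matrix (Fin ng) (Fin 1) D)
    (f g : D)
    (hf : f = (Bf * vf) 0 0) (hg : g = (Bg * vg) 0 0)
    (C : Matrix (Fin k ⊕ Fin ng) (Fin k ⊕ Fin ng) D)
    (hC : C = Matrix.fromBlocks
      (Matrix.of fun i j : Fin k => Af i.castSucc j.castSucc)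
      (Matrix.of fun (i : Fin k) (j : Fin ng) =>
        algebraMap K D lamf * Af i.castSucc (Fin.last k) *
          (if j = 0 then (1 : D) else 0))
      0 Ag)
    (w : Matrix (Fin k ⊕ Fin ng) (Fin 1) D)
    (hw : w = Matrix.of (Sum.elim (fun (_ : Fin k) (_ : Fin 1) => (0 : D))
      (fun i => vg i))) :
    ∃ C' : Matrix (Fin k ⊕ Fin ng) (Fin k ⊕ Fin ng) D,
      C * C' = 1 ∧ C' * C = 1 ∧ (C' * w) (Sum.inl 0) 0 = f * g := by
  obtain ⟨hAfBf, hBfAf⟩ := hBf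
  set A := Af.submatrix Fin.castSucc Fin.castSucc
  set A' := Bf.submatrix Fin.castSucc Fin.castSucc
  set c : Fin k → D := fun i => Af i.castSucc (Fin.last k)
  set B := vecMulVec (lamf • c) (Pi.single (0 : Fin ng) (1 : D))
  have hCB : C = fromBlocks A B 0 Ag := by
    rw [hC]
    congr
    ext i j
    simp [Pi.single_apply, c, Algebra.smul_def]
  have hf' : f = lamf • -(A' *ᵥ c) 0 := by
    rw [hf, ← apply_castSucc_last_eq_neg_mulVec hAflast hBfAf]
    simp [mul_apply, hvf, Algebra.smul_def, Algebra.commutes]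
  refine ⟨fromBlocks A' (-(A' * B * Bg)) 0 Bg, ?_, ?_, ?_⟩
  · rw [hCB]
    exact fromBlocks_zero₂₁_mul_eq_one B
      (submatrix_castSucc_mul_eq_one (row_last_of_mul_eq_one hAflast hAfBf) hAfBf) hBg.1
  · rw [hCB]
    exact mul_fromBlocks_zero₂₁_eq_one B (submatrix_castSucc_mul_eq_one hAflast hBfAf) hBg.2
  · rw [hw, fromBlocks_mul_apply_inl_of_eq_zero, hf', hg]
    simp only [B, mul_vecMulVec, vecMulVec_mul, single_vecMul, one_smul, mulVec_smul]
    simp [vecMulVec_apply, mul_apply, Finset.mul_sum, mul_assoc]
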